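/- Let D1, D2 be Condorcet domains on disjoint finite sets A, B with |A| = m, |B| = n, and let u ∈ D1, v ∈ D2. Then |(D1 ⊗ D2)(u,v)| = |D1|·|D2| + C(n+m, m) − 1. -/

import Mathlib

/-! Linear orders on a finite set `A` are encoded as duplicate-free lists
(top alternative first) whose set of entries is `A`. -/

variable {α β : Type*}

/-- `w` is a (strict) linear order on `A`, written from top to bottom. -/
def IsLinOrd [DecidableEq α] (A : Finset α) (w : List α) : Prop :=
  w.Nodup ∧ w.toFinset = A

/-- Restriction of the order `w` to the set `B`. -/
def restr [DecidableEq α] (B : Finset α) (w : List α) : List α :=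
  w.filter (fun x => decide (x ∈ B))

/-- Strict majority relation of a profile `P` (a list of linear orders):
`a` beats `b` iff strictly more orders of `P` rank `a` above `b`. -/
def Maj [DecidableEq α] (P : List (List α)) (a b : α) : Prop :=
  P.countP (fun w => decide (w.idxOf a < w.idxOf b)) >
    P.countP (fun w => decide (w.idxOf b < w.idxOf a))

/-- `D` is a Condorcet domain on `A`: all members are linear orders on `A` and
the majority relation of every odd profile over `D` is transitive. -/
def IsCondorcet [DecidableEq α] (A : Finset α) (D : Set (List α)) : Prop :=
  (∀ w ∈ D, IsLinOrd A w) ∧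
    ∀ P : List (List α), (∀ w ∈ P, w ∈ D) → Odd P.length →
      ∀ a ∈ A, ∀ b ∈ A, ∀ c ∈ A, Maj P a b → Maj P b c → Maj P a c

/-- The never condition `x N_{a,b,c} i` (1-based position `i`): no order of `D`
restricted to `{a,b,c}` has `x` in the `i`-th position. -/
def Never [DecidableEq α] (D : Set (List α)) (a b c x : α) (i : ℕ) : Prop :=
  ∀ w ∈ D, (restr {a, b, c} w)[i - 1]? ≠ some x

/-- `D` is a peak-pit domain on `A`: every triple satisfies a never-top or a
never-bottom condition. -/
def PeakPit [DecidableEq α] (A : Finset α) (D : Set (List α)) : Prop :=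
  ∀ a ∈ A, ∀ b ∈ A, ∀ c ∈ A, a ≠ b → a ≠ c → b ≠ c →
    ∃ x ∈ ({a, b, c} : Finset α), Never D a b c x 1 ∨ Never D a b c x 3

/-- Concatenation `D1 ⊙ D2` of two domains (all of `A` ranked above all of `B`). -/
def concatDom (D1 D2 : Set (List α)) : Set (List α) :=
  {w | ∃ x ∈ D1, ∃ y ∈ D2, w = x ++ y}

/-- The set `u ⊕ v` of all shuffles of `u ∈ L(A)` and `v ∈ L(B)`. -/
def shuffles [DecidableEq α] (A B : Finset α) (u v : List α) : Set (List α) :=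
  {w | IsLinOrd (A ∪ B) w ∧ restr A w = u ∧ restr B w = v}

/-- The tensor product `(D1 ⊗ D2)(u,v)` of Danilov–Karzanov–Koshevoy. -/
def tensor [DecidableEq α] (A B : Finset α) (D1 D2 : Set (List α))
    (u v : List α) : Set (List α) :=
  concatDom D1 D2 ∪ shuffles A B u v

/-- `D` has maximal width: it contains a pair of completely reversed orders. -/
def MaxWidth (D : Set (List α)) : Prop :=
  ∃ w ∈ D, w.reverse ∈ D

/-- `w'` is obtained from `w` by one swap of adjacent alternatives. -/
def AdjSwap (w w' : List α) : Prop :=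
  ∃ (l r : List α) (x y : α), w = l ++ x :: y :: r ∧ w' = l ++ y :: x :: r

/-- `D` is semi-connected: some order `w ∈ D` is joined to its reverse by a path
inside `D` of adjacent transpositions in which each pair of alternatives is
swapped exactly once (a maximal chain in the weak Bruhat order, of length
`C(|A|,2)`). -/
def SemiConnected (A : Finset α) (D : Set (List α)) : Prop :=
  ∃ (w : List α) (c : ℕ → List α), w ∈ D ∧ c 0 = w ∧
    c (A.card.choose 2) = w.reverse ∧
    (∀ i, i ≤ A.card.choose 2 → c i ∈ D) ∧
    (∀ i, i < A.card.choose 2 → AdjSwap (c i) (c (i + 1)))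

/-- `D` is a maximal Condorcet domain on `A`. -/
def MaxCondorcet [DecidableEq α] (A : Finset α) (D : Set (List α)) : Prop :=
  IsCondorcet A D ∧ ∀ D' : Set (List α), IsCondorcet A D' → D ⊆ D' → D' ⊆ D

/-- Cardinality of the Fishburn domain `F_n` (Galambos–Reiner formula). -/
def fishCard (n : ℕ) : ℕ :=
  (n + 3) * 2 ^ (n - 3) -
    (if Even n then (2 * n - 3) * (n - 2).choose (n / 2 - 1) / 2
     else (n - 1) / 2 * (n - 1).choose ((n - 1) / 2))

/-! A member `x ++ y` of `D₁ ⊙ D₂` restricts to `x` on `A` and to `y` on `B`, so `u ++ v` is the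
only order lying in both `D₁ ⊙ D₂` and `u ⊕ v`. Since all orders of `D₁` have length `m`,
concatenation is injective on `D₁ × D₂`, giving `|D₁ ⊙ D₂| = |D₁|⋅|D₂|`. The shuffles of `u` and `v`
are enumerated without repetition by the recursion on the first letter, whose length satisfies
Pascal's rule, so `|u ⊕ v| = C(m + n, m)`. Inclusion–exclusion finishes the count. -/

namespace List

def shuffleList : List α → List α → List (List α)
  | [], v => [v]
  | a :: u, [] => [a :: u]
  | a :: u, b :: v =>
      (shuffleList u (b :: v)).map (a :: ·) ++ (shuffleList (a :: u) v).map (b :: ·)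

@[simp]
theorem shuffleList_nil_left (v : List α) : shuffleList [] v = [v] := by
  simp [shuffleList]

@[simp]
theorem shuffleList_nil_right (u : List α) : shuffleList u [] = [u] := by
  cases u <;> simp [shuffleList]

theorem length_shuffleList (u v : List α) :
    (shuffleList u v).length = (u.length + v.length).choose u.length := by
  induction u, v using shuffleList.induct with
  | case1 v => simp
  | case2 a u => simp
  | case3 a u b v ih₁ ih₂ =>
    simp only [shuffleList, length_append, length_map, ih₁, ih₂, length_cons]
    rw [show u.length + 1 + (v.length + 1) = u.length + (v.length + 1) + 1 by omega,
      Nat.choose_succ_succ, Nat.add_right_comm u.length 1, Nat.add_assoc]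

theorem nodup_shuffleList {u v : List α} (h : u.Disjoint v) : (shuffleList u v).Nodup := by
  induction u, v using shuffleList.induct with
  | case1 v => simp
  | case2 a u => simp
  | case3 a u b v ih₁ ih₂ =>
    have hab : a ≠ b := fun hab => h mem_cons_self (hab ▸ mem_cons_self)
    simp only [shuffleList]
    refine Nodup.append ?_ ?_ ?_
    · exact (ih₁ (disjoint_of_disjoint_cons_left h)).map cons_injective
    · exact (ih₂ (disjoint_of_disjoint_cons_right h)).map cons_injective
    · simp only [List.Disjoint, mem_map]
      rintro _ ⟨_, _, rfl⟩ ⟨_, _, h'⟩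
      exact hab (cons_eq_cons.1 h').1.symm

theorem cons_mem_shuffleList_cons_left {a : α} {t u v : List α} (h : t ∈ shuffleList u v) :
    a :: t ∈ shuffleList (a :: u) v := by
  cases v with
  | nil => simp_all
  | cons b v => simp [shuffleList, h]

theorem cons_mem_shuffleList_cons_right {b : α} {t u v : List α} (h : t ∈ shuffleList u v) :
    b :: t ∈ shuffleList u (b :: v) := by
  cases u with
  | nil => simp_all
  | cons a u => simp [shuffleList, h]

theorem mem_shuffleList_filter (p : α → Bool) (w : List α) :
    w ∈ shuffleList (w.filter p) (w.filter (!p ·)) := by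
  induction w with
  | nil => simp
  | cons c w ih =>
    cases hc : p c
    · simpa [filter_cons, hc] using cons_mem_shuffleList_cons_right ih
    · simpa [filter_cons, hc] using cons_mem_shuffleList_cons_left ih

theorem filter_eq_of_mem_shuffleList {p : α → Bool} {u v w : List α} (hu : ∀ x ∈ u, p x)
    (hv : ∀ x ∈ v, ¬p x) (hw : w ∈ shuffleList u v) :
    w.filter p = u ∧ w.filter (!p ·) = v := by
  induction u, v using shuffleList.induct generalizing w with
  | case1 v => simp_all [filter_eq_nil_iff, filter_eq_self]
  | case2 a u => simp_all [filter_eq_nil_iff, filter_eq_self]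
  | case3 a u b v ih₁ ih₂ =>
    simp only [shuffleList, mem_append, mem_map] at hw
    rcases hw with ⟨t, ht, rfl⟩ | ⟨t, ht, rfl⟩
    · have := ih₁ (fun x hx => hu x (mem_cons_of_mem a hx)) hv ht
      simp_all
    · have := ih₂ hu (fun x hx => hv x (mem_cons_of_mem b hx)) ht
      simp_all

theorem mem_shuffleList_iff {p : α → Bool} {u v w : List α} (hu : ∀ x ∈ u, p x)
    (hv : ∀ x ∈ v, ¬p x) :
    w ∈ shuffleList u v ↔ w.filter p = u ∧ w.filter (!p ·) = v := by
  refine ⟨filter_eq_of_mem_shuffleList hu hv, ?_⟩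
  rintro ⟨rfl, rfl⟩
  exact mem_shuffleList_filter p w

end List

section LinearOrders

theorem concatDom_eq_image (D₁ D₂ : Set (List α)) :
    concatDom D₁ D₂ = (fun p : List α × List α => p.1 ++ p.2) '' D₁ ×ˢ D₂ := by
  ext w
  simp [concatDom, eq_comm]

theorem ncard_concatDom {D₁ D₂ : Set (List α)} {k : ℕ} (h : ∀ x ∈ D₁, x.length = k) :
    (concatDom D₁ D₂).ncard = D₁.ncard * D₂.ncard := by
  rw [concatDom_eq_image, Set.InjOn.ncard_image, Set.ncard_prod]
  rintro ⟨x₁, y₁⟩ ⟨hx₁, -⟩ ⟨x₂, y₂⟩ ⟨hx₂, -⟩ hxy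
  obtain ⟨rfl, rfl⟩ := List.append_inj hxy ((h x₁ hx₁).trans (h x₂ hx₂).symm)
  rfl

variable [DecidableEq α] {A B : Finset α} {w x y : List α}

theorem IsLinOrd.mem_iff (h : IsLinOrd A w) {a : α} : a ∈ w ↔ a ∈ A := by
  rw [← h.2, List.mem_toFinset]

theorem IsLinOrd.length_eq (h : IsLinOrd A w) : w.length = A.card := by
  rw [← h.2, List.toFinset_card_of_nodup h.1]

theorem IsLinOrd.perm (h : IsLinOrd A w) (hxw : x.Perm w) : IsLinOrd A x :=
  ⟨hxw.nodup_iff.2 h.1, (List.toFinset_eq_of_perm _ _ hxw).trans h.2⟩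

theorem IsLinOrd.append (hAB : Disjoint A B) (hx : IsLinOrd A x) (hy : IsLinOrd B y) :
    IsLinOrd (A ∪ B) (x ++ y) := by
  refine ⟨List.nodup_append.2 ⟨hx.1, hy.1, ?_⟩, by rw [List.toFinset_append, hx.2, hy.2]⟩
  rintro a ha _ hb rfl
  exact Finset.disjoint_left.1 hAB (hx.mem_iff.1 ha) (hy.mem_iff.1 hb)

theorem finite_setOf_isLinOrd (A : Finset α) : {w : List α | IsLinOrd A w}.Finite := by
  refine A.toList.permutations.finite_toSet.subset fun w hw => ?_
  exact List.mem_permutations.2 <| List.perm_of_nodup_nodup_toFinset_eq hw.1 A.nodup_toList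
    (hw.2.trans A.toList_toFinset.symm)

theorem restr_of_isLinOrd (h : IsLinOrd A w) : restr A w = w :=
  List.filter_eq_self.2 fun _ ha => decide_eq_true (h.mem_iff.1 ha)

theorem restr_eq_nil_of_isLinOrd (hAB : Disjoint A B) (h : IsLinOrd B w) : restr A w = [] :=
  List.filter_eq_nil_iff.2 fun _ ha hA =>
    Finset.disjoint_left.1 hAB (of_decide_eq_true hA) (h.mem_iff.1 ha)

theorem restr_append (S : Finset α) (x y : List α) : restr S (x ++ y) = restr S x ++ restr S y :=
  List.filter_append ..

theorem restr_append_of_isLinOrd (hAB : Disjoint A B) (hx : IsLinOrd A x) (hy : IsLinOrd B y) :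
    restr A (x ++ y) = x ∧ restr B (x ++ y) = y := by
  rw [restr_append, restr_append, restr_of_isLinOrd hx, restr_of_isLinOrd hy,
    restr_eq_nil_of_isLinOrd hAB hy, restr_eq_nil_of_isLinOrd hAB.symm hx, List.append_nil,
    List.nil_append]
  exact ⟨rfl, rfl⟩

theorem restr_eq_filter_not_mem (hAB : Disjoint A B) (hw : IsLinOrd (A ∪ B) w) :
    restr B w = w.filter (fun a => !decide (a ∈ A)) := by
  refine List.filter_congr fun a ha => ?_
  have := hw.mem_iff.1 ha
  by_cases hA : a ∈ A
  · simp [hA, Finset.disjoint_left.1 hAB hA]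
  · simp_all

theorem shuffles_eq_shuffleList (hAB : Disjoint A B) {u v : List α} (hu : IsLinOrd A u)
    (hv : IsLinOrd B v) : shuffles A B u v = {w | w ∈ u.shuffleList v} := by
  ext w
  have hpu : ∀ a ∈ u, decide (a ∈ A) := fun a ha => decide_eq_true (hu.mem_iff.1 ha)
  have hpv : ∀ a ∈ v, ¬decide (a ∈ A) := fun a ha =>
    by simpa using Finset.disjoint_right.1 hAB (hv.mem_iff.1 ha)
  simp only [shuffles, Set.mem_ofPred_eq, List.mem_shuffleList_iff hpu hpv]
  constructor
  · rintro ⟨hw, hwu, hwv⟩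
    exact ⟨hwu, by rw [← restr_eq_filter_not_mem hAB hw, hwv]⟩
  · rintro ⟨hwu, hwv⟩
    have hw : IsLinOrd (A ∪ B) w :=
      (hu.append hAB hv).perm (hwu ▸ hwv ▸ (List.filter_append_perm _ w).symm)
    exact ⟨hw, hwu, by rw [restr_eq_filter_not_mem hAB hw, hwv]⟩

theorem ncard_shuffles (hAB : Disjoint A B) {u v : List α} (hu : IsLinOrd A u)
    (hv : IsLinOrd B v) : (shuffles A B u v).ncard = (A.card + B.card).choose A.card := by
  have huv : u.Disjoint v := fun a hau hav =>
    Finset.disjoint_left.1 hAB (hu.mem_iff.1 hau) (hv.mem_iff.1 hav)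
  rw [shuffles_eq_shuffleList hAB hu hv, ← List.coe_toFinset, Set.ncard_coe_finset,
    List.toFinset_card_of_nodup (List.nodup_shuffleList huv), List.length_shuffleList,
    hu.length_eq, hv.length_eq]

theorem concatDom_inter_shuffles (hAB : Disjoint A B) {D₁ D₂ : Set (List α)}
    (h₁ : ∀ x ∈ D₁, IsLinOrd A x) (h₂ : ∀ y ∈ D₂, IsLinOrd B y) {u v : List α}
    (hu : u ∈ D₁) (hv : v ∈ D₂) : concatDom D₁ D₂ ∩ shuffles A B u v = {u ++ v} := by
  ext w
  simp only [Set.mem_inter_iff, Set.mem_singleton_iff, concatDom, shuffles, Set.mem_ofPred_eq]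
  constructor
  · rintro ⟨⟨x, hx, y, hy, rfl⟩, -, hxu, hyv⟩
    obtain ⟨hx', hy'⟩ := restr_append_of_isLinOrd hAB (h₁ x hx) (h₂ y hy)
    rw [← hxu, ← hyv, hx', hy']
  · rintro rfl
    exact ⟨⟨u, hu, v, hv, rfl⟩, (h₁ u hu).append hAB (h₂ v hv),
      restr_append_of_isLinOrd hAB (h₁ u hu) (h₂ v hv)⟩

theorem ncard_tensor (hAB : Disjoint A B) {D₁ D₂ : Set (List α)}
    (h₁ : ∀ x ∈ D₁, IsLinOrd A x) (h₂ : ∀ y ∈ D₂, IsLinOrd B y) {u v : List α}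
    (hu : u ∈ D₁) (hv : v ∈ D₂) :
    (tensor A B D₁ D₂ u v).ncard =
      D₁.ncard * D₂.ncard + (A.card + B.card).choose A.card - 1 := by
  have hfin₁ : D₁.Finite := (finite_setOf_isLinOrd A).subset h₁
  have hfin₂ : D₂.Finite := (finite_setOf_isLinOrd B).subset h₂
  have hconcat : (concatDom D₁ D₂).Finite := by
    rw [concatDom_eq_image]; exact (hfin₁.prod hfin₂).image _
  have hshuffles : (shuffles A B u v).Finite := by
    rw [shuffles_eq_shuffleList hAB (h₁ u hu) (h₂ v hv)]; exact (u.shuffleList v).finite_toSet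
  have key := Set.ncard_union_add_ncard_inter _ _ hconcat hshuffles
  rw [concatDom_inter_shuffles hAB h₁ h₂ hu hv, Set.ncard_singleton,
    ncard_concatDom fun x hx => (h₁ x hx).length_eq, ncard_shuffles hAB (h₁ u hu) (h₂ v hv)]
    at key
  unfold tensor
  omega

end LinearOrders

/-- `|(D1 ⊗ D2)(u,v)| = |D1|⬝|D2| + C(n+m, m) − 1`. -/
theorem stmt_7 [DecidableEq α] (A B : Finset α) (hAB : Disjoint A B)
    (m n : ℕ) (hm : A.card = m) (hn : B.card = n)
    (D1 D2 : Set (List α))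
    (h1 : IsCondorcet A D1) (h2 : IsCondorcet B D2)
    (u v : List α) (hu : u ∈ D1) (hv : v ∈ D2) :
    (tensor A B D1 D2 u v).ncard =
      D1.ncard * D2.ncard + (n + m).choose m - 1 := by
  subst hm hn
  rw [ncard_tensor hAB h1.1 h2.1 hu hv, Nat.add_comm B.card]
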